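/- For λ>0, l∈ℕ, r∈ℝ, the function φ'_{λ,l,r}(x,t) = cos(λt+rx₃)·𝓛_l((λ/2)(x₁²+x₂²)) on ℝ³×ℝ satisfies the eigenvalue equations L'φ' = (λ(2l+1)+r²)·φ', Δ'φ' = λ²·φ', and D'φ' = λr·φ', where L' = −((∂_{x₁} − ½x₂∂_t)² + (∂_{x₂} + ½x₁∂_t)² + ∂_{x₃}²), Δ' = −∂_t², and D' = −∂_{x₃}∂_t. -/

import Mathlib

open MeasureTheory Complex Matrix

noncomputable section

/-- The Laguerre function of order 0: `𝓛_l(u) = (1/l!) e^{u/2} (d/du)^l (u^l e^{-u})`. -/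
def lag (l : ℕ) (u : ℝ) : ℝ :=
  (l.factorial : ℝ)⁻¹ * Real.exp (u / 2) * deriv^[l] (fun v : ℝ => v ^ l * Real.exp (-v)) u

/-- The regular bounded spherical functions of `(K' ⋉ N', K')`:
`φ'_{λ,l,r}(x,t) = cos(λt + r x₃) · 𝓛_l((λ/2)(x₁² + x₂²))`. -/
def sph' (lam : ℝ) (l : ℕ) (r : ℝ) (p : (Fin 3 → ℝ) × ℝ) : ℝ :=
  Real.cos (lam * p.2 + r * p.1 2) * lag l (lam / 2 * ((p.1 0) ^ 2 + (p.1 1) ^ 2))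

/-- The Bessel function of order 0: `J₀(z) = (1/π) ∫₀^π cos(z sin θ) dθ`. -/
def J0 (z : ℝ) : ℝ := (1 / Real.pi) * ∫ θ in (0:ℝ)..Real.pi, Real.cos (z * Real.sin θ)

/-- The singular bounded spherical functions of `(K' ⋉ N', K')`:
`φ'_{ζ,r}(x,t) = J₀(ζ √(x₁² + x₂²)) · cos(r x₃)`. -/
def sphSing' (zeta r : ℝ) (p : (Fin 3 → ℝ) × ℝ) : ℝ :=
  J0 (zeta * Real.sqrt ((p.1 0) ^ 2 + (p.1 1) ^ 2)) * Real.cos (r * p.1 2)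


/-- Partial derivative in the variable `x_j` of a function on `ℝ³ × ℝ`. -/
def pdx' (j : Fin 3) (g : (Fin 3 → ℝ) × ℝ → ℝ) : (Fin 3 → ℝ) × ℝ → ℝ :=
  fun p => fderiv ℝ g p (Pi.single j 1, 0)

/-- Partial derivative in the variable `t` of a function on `ℝ³ × ℝ`. -/
def pdt (g : (Fin 3 → ℝ) × ℝ → ℝ) : (Fin 3 → ℝ) × ℝ → ℝ :=
  fun p => fderiv ℝ g p (0, 1)

/-- The left-invariant vector field `X'₁ = ∂_{x₁} − ½ x₂ ∂_t` on `N'`. -/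
def X1' (g : (Fin 3 → ℝ) × ℝ → ℝ) : (Fin 3 → ℝ) × ℝ → ℝ :=
  fun p => pdx' 0 g p - (1 / 2) * p.1 1 * pdt g p

/-- The left-invariant vector field `X'₂ = ∂_{x₂} + ½ x₁ ∂_t` on `N'`. -/
def X2' (g : (Fin 3 → ℝ) × ℝ → ℝ) : (Fin 3 → ℝ) × ℝ → ℝ :=
  fun p => pdx' 1 g p + (1 / 2) * p.1 0 * pdt g p

/-- The sub-Laplacian `L' = −(X'₁² + X'₂² + ∂_{x₃}²)` on `N'`. -/
def Lp (g : (Fin 3 → ℝ) × ℝ → ℝ) : (Fin 3 → ℝ) × ℝ → ℝ :=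
  fun p => -(X1' (X1' g) p + X2' (X2' g) p + pdx' 2 (pdx' 2 g) p)

/-- The central Laplacian `Δ' = −∂_t²` on `N'`. -/
def Deltap (g : (Fin 3 → ℝ) × ℝ → ℝ) : (Fin 3 → ℝ) × ℝ → ℝ :=
  fun p => -(pdt (pdt g) p)

/-- The operator `D' = −∂_{x₃}∂_t` on `N'`. -/
def Dp (g : (Fin 3 → ℝ) × ℝ → ℝ) : (Fin 3 → ℝ) × ℝ → ℝ :=
  fun p => -(pdx' 2 (pdt g) p)

/-!
Write `φ' = cos θ · 𝓛_l(ρ)` with `θ = λt + r x₃` and `ρ = (λ/2)(x₁² + x₂²)`. The derivatives `∂_t`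
and `∂_{x₃}` only see the cosine, which gives the equations for `Δ'` and `D'` at once. In
`X'₁² + X'₂²` the cross terms carry `x₂∂_{x₁} − x₁∂_{x₂}`, which kills the radial factor, and what
is left is `2λ(ρ𝓛_l''(ρ) + 𝓛_l'(ρ) − ρ𝓛_l(ρ)/4) cos θ`. By Rodrigues' formula
`𝓛_l(u) = P(u)e^{-u/2}/l!` where `P e^{-u} = (d/du)^l(u^l e^{-u})`, and the Laguerre equation
`uP'' + (1 − u)P' + lP = 0` turns this into `−λ(2l + 1)𝓛_l(ρ) cos θ`.
-/

open Polynomial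

def rodrigues (l : ℕ) : ℕ → ℝ[X]
  | 0 => X ^ l
  | n + 1 => derivative (rodrigues l n) - rodrigues l n

theorem iterate_deriv_pow_mul_exp_neg (l n : ℕ) :
    deriv^[n] (fun v : ℝ => v ^ l * Real.exp (-v)) =
      fun x => (rodrigues l n).eval x * Real.exp (-x) := by
  induction n with
  | zero => simp [rodrigues]
  | succ n ih =>
    rw [Function.iterate_succ_apply', ih]
    funext x
    have h := ((rodrigues l n).hasDerivAt x).fun_mul (hasDerivAt_neg x).exp
    rw [h.deriv, rodrigues, eval_sub]
    ring

theorem natCast_mul_rodrigues (l n : ℕ) :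
    (n : ℝ[X]) * rodrigues l n =
      n * (derivative (rodrigues l (n - 1)) - rodrigues l (n - 1)) := by
  cases n <;> simp [rodrigues]

theorem X_mul_derivative_rodrigues (l n : ℕ) :
    X * derivative (rodrigues l n) =
      (l - n : ℝ[X]) * rodrigues l n - (n : ℝ[X]) * rodrigues l (n - 1) := by
  induction n with
  | zero =>
    cases l with
    | zero => simp [rodrigues]
    | succ m => simp [rodrigues]; ring
  | succ n ih =>
    have hD := congrArg derivative ih
    simp only [derivative_mul, derivative_X, one_mul, derivative_sub, derivative_natCast,
      zero_mul] at hD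
    simp only [rodrigues, Nat.add_sub_cancel, derivative_sub]
    push_cast
    linear_combination hD - ih + natCast_mul_rodrigues l n

theorem laguerre_ode_rodrigues (l : ℕ) :
    X * derivative (derivative (rodrigues l l)) + (1 - X) * derivative (rodrigues l l)
      + (l : ℝ[X]) * rodrigues l l = 0 := by
  have h := X_mul_derivative_rodrigues l (l + 1)
  simp only [rodrigues, Nat.add_sub_cancel, derivative_sub] at h
  push_cast at h
  linear_combination h

-- The Laguerre function and all its derivatives have this shape.
def dampedEval (P : ℝ[X]) (u : ℝ) : ℝ := P.eval u * Real.exp (-u / 2)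

theorem hasDerivAt_dampedEval (P : ℝ[X]) (u : ℝ) :
    HasDerivAt (dampedEval P) (dampedEval (derivative P - C 2⁻¹ * P) u) u := by
  have h : HasDerivAt (fun u => P.eval u * Real.exp (-u / 2))
      ((derivative P).eval u * Real.exp (-u / 2) + P.eval u * (Real.exp (-u / 2) * (-1 / 2))) u :=
    (P.hasDerivAt u).mul ((hasDerivAt_id' u).neg.div_const 2).exp
  refine h.congr_deriv ?_
  simp only [dampedEval, eval_sub, eval_mul, eval_C]
  ring

theorem deriv_dampedEval (P : ℝ[X]) :
    deriv (dampedEval P) = dampedEval (derivative P - C 2⁻¹ * P) :=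
  funext fun u => (hasDerivAt_dampedEval P u).deriv

@[fun_prop]
theorem differentiable_dampedEval (P : ℝ[X]) : Differentiable ℝ (dampedEval P) :=
  fun u => (hasDerivAt_dampedEval P u).differentiableAt

theorem lag_eq_smul_dampedEval (l : ℕ) :
    lag l = (l.factorial : ℝ)⁻¹ • dampedEval (rodrigues l l) := by
  funext u
  simp only [lag, iterate_deriv_pow_mul_exp_neg, dampedEval, Pi.smul_apply, smul_eq_mul]
  rw [show Real.exp (-u / 2) = Real.exp (u / 2) * Real.exp (-u) by
    rw [← Real.exp_add]; ring_nf]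
  ring

theorem deriv_lag (l : ℕ) :
    deriv (lag l) =
      (l.factorial : ℝ)⁻¹ • dampedEval (derivative (rodrigues l l) - C 2⁻¹ * rodrigues l l) := by
  funext u
  rw [lag_eq_smul_dampedEval, deriv_const_smul_field, deriv_dampedEval]
  rfl

@[fun_prop]
theorem differentiable_lag (l : ℕ) : Differentiable ℝ (lag l) := by
  rw [lag_eq_smul_dampedEval]; fun_prop

@[fun_prop]
theorem differentiable_deriv_lag (l : ℕ) : Differentiable ℝ (deriv (lag l)) := by
  rw [deriv_lag]; fun_prop

theorem lag_ode (l : ℕ) (u : ℝ) :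
    u * deriv (deriv (lag l)) u + deriv (lag l) u + (l + 2⁻¹ - u / 4) * lag l u = 0 := by
  have h := congrArg (eval u) (laguerre_ode_rodrigues l)
  simp only [eval_add, eval_mul, eval_sub, eval_X, eval_one, eval_natCast, eval_zero] at h
  rw [deriv_lag, deriv_const_smul_field, deriv_dampedEval, lag_eq_smul_dampedEval]
  simp only [Pi.smul_apply, smul_eq_mul, dampedEval, derivative_sub, derivative_mul, derivative_C,
    zero_mul, zero_add, eval_sub, eval_mul, eval_C]
  linear_combination ((l.factorial : ℝ)⁻¹ * Real.exp (-u / 2)) * h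

section PartialDerivatives

variable {𝕜 ι E : Type*} [NontriviallyNormedField 𝕜] [NormedAddCommGroup E] [NormedSpace 𝕜 E]

@[simp]
theorem fderiv_fst_apply_apply (k : ι) (p v : (ι → 𝕜) × E) :
    fderiv 𝕜 (fun q : (ι → 𝕜) × E => q.1 k) p v = v.1 k := by
  let π := (ContinuousLinearMap.proj k).comp (ContinuousLinearMap.fst 𝕜 (ι → 𝕜) E)
  exact congrArg (· v) (π.hasFDerivAt (x := p)).fderiv

theorem fderiv_scalar_comp (F : 𝕜 → 𝕜) {f : E → 𝕜} {x : E} (hF : DifferentiableAt 𝕜 F (f x))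
    (hf : DifferentiableAt 𝕜 f x) :
    fderiv 𝕜 (fun y => F (f y)) x = deriv F (f x) • fderiv 𝕜 f x :=
  (hF.hasDerivAt.comp_hasFDerivAt x hf.hasFDerivAt).fderiv

end PartialDerivatives

section SphericalFunction

attribute [local simp] fderiv_fun_add fderiv_fun_sub fderiv_fun_mul fderiv_const_mul fderiv_fun_pow
  fderiv_snd fderiv_cos fderiv_sin Pi.single_apply

variable (lam : ℝ) (l : ℕ) (r : ℝ)

theorem sph'_eq : sph' lam l r = fun p =>
    Real.cos (lam * p.2 + r * p.1 2) * lag l (lam / 2 * (p.1 0 ^ 2 + p.1 1 ^ 2)) := rfl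

theorem pdt_sph' : pdt (sph' lam l r) = fun p =>
    -(lam * Real.sin (lam * p.2 + r * p.1 2) * lag l (lam / 2 * (p.1 0 ^ 2 + p.1 1 ^ 2))) := by
  funext p
  simp (disch := fun_prop) [pdt, sph'_eq, fderiv_scalar_comp (lag l)]
  ring

theorem pdx'_two_sph' : pdx' 2 (sph' lam l r) = fun p =>
    -(r * Real.sin (lam * p.2 + r * p.1 2) * lag l (lam / 2 * (p.1 0 ^ 2 + p.1 1 ^ 2))) := by
  funext p
  simp (disch := fun_prop) [pdx', sph'_eq, fderiv_scalar_comp (lag l)]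
  ring

theorem X1'_sph' : X1' (sph' lam l r) = fun p =>
    lam * p.1 0 * Real.cos (lam * p.2 + r * p.1 2)
        * deriv (lag l) (lam / 2 * (p.1 0 ^ 2 + p.1 1 ^ 2))
      + lam / 2 * p.1 1 * Real.sin (lam * p.2 + r * p.1 2)
        * lag l (lam / 2 * (p.1 0 ^ 2 + p.1 1 ^ 2)) := by
  funext p
  simp (disch := fun_prop) [X1', pdx', pdt, sph'_eq, fderiv_scalar_comp (lag l)]
  ring

theorem X2'_sph' : X2' (sph' lam l r) = fun p =>
    lam * p.1 1 * Real.cos (lam * p.2 + r * p.1 2)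
        * deriv (lag l) (lam / 2 * (p.1 0 ^ 2 + p.1 1 ^ 2))
      - lam / 2 * p.1 0 * Real.sin (lam * p.2 + r * p.1 2)
        * lag l (lam / 2 * (p.1 0 ^ 2 + p.1 1 ^ 2)) := by
  funext p
  simp (disch := fun_prop) [X2', pdx', pdt, sph'_eq, fderiv_scalar_comp (lag l)]
  ring

theorem Deltap_sph' (p : (Fin 3 → ℝ) × ℝ) :
    Deltap (sph' lam l r) p = lam ^ 2 * sph' lam l r p := by
  rw [Deltap, pdt_sph']
  simp (disch := fun_prop) [pdt, sph'_eq, fderiv_scalar_comp (lag l)]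
  ring

theorem Dp_sph' (p : (Fin 3 → ℝ) × ℝ) : Dp (sph' lam l r) p = lam * r * sph' lam l r p := by
  rw [Dp, pdt_sph']
  simp (disch := fun_prop) [pdx', sph'_eq, fderiv_scalar_comp (lag l)]
  ring

theorem Lp_sph' (p : (Fin 3 → ℝ) × ℝ) :
    Lp (sph' lam l r) p = (lam * (2 * l + 1) + r ^ 2) * sph' lam l r p := by
  rw [_root_.Lp, X1'_sph', X2'_sph', pdx'_two_sph']
  simp (disch := fun_prop) [X1', X2', pdx', pdt, sph'_eq, fderiv_scalar_comp (lag l),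
    fderiv_scalar_comp (deriv (lag l))]
  linear_combination (-(2 * lam * Real.cos (lam * p.2 + r * p.1 2)))
    * lag_ode l (lam / 2 * (p.1 0 ^ 2 + p.1 1 ^ 2))

end SphericalFunction

/-- The eigenvalue equations for the regular bounded spherical functions of `(K' ⋉ N', K')`:
`L'φ' = (λ(2l+1)+r²)φ'`, `Δ'φ' = λ²φ'`, `D'φ' = λrφ'`. -/
theorem statement19 :
    ∀ lam > (0:ℝ), ∀ l : ℕ, ∀ r : ℝ, ∀ p : (Fin 3 → ℝ) × ℝ,
      Lp (sph' lam l r) p = (lam * (2 * l + 1) + r ^ 2) * sph' lam l r p ∧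
      Deltap (sph' lam l r) p = lam ^ 2 * sph' lam l r p ∧
      Dp (sph' lam l r) p = lam * r * sph' lam l r p := by
  intro lam _ l r p
  exact ⟨Lp_sph' lam l r p, Deltap_sph' lam l r p, Dp_sph' lam l r p⟩
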